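/- arXiv:2209.10075 — 3 statements merged into one kernel-verified Lean document; each statement's English description precedes it below -/
import Mathlib

section
/- For any two permutations σ, τ in S_n whose product στ is an n-cycle, the number of cycles of σ plus the number of cycles of τ is at most n+1. -/
def IsFullCycle {n : ℕ} (σ : Equiv.Perm (Fin n)) : Prop :=
  σ.IsCycle ∧ σ.support = Finset.univ

/-- The number of cycles of a permutation, counting fixed points. -/
def cycleCount {n : ℕ} (σ : Equiv.Perm (Fin n)) : ℕ :=
  σ.cycleType.card + (Finset.univ.filter fun x => σ x = x).card

/-!
Each point `x` joins the `σ`-cycle through `x` to the `τ`-cycle through `x`. This gives a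
bipartite graph whose vertices are the cycles of `σ` and of `τ` and which has at most `n` edges.
It is connected: `x` is joined to `τ x` through its `τ`-cycle and `τ x` to `σ (τ x)` through a
`σ`-cycle, so everything in one cycle of `σ * τ` lies in one component, and `σ * τ` has only one
cycle. A connected graph has at most one more vertex than it has edges.
-/

open Equiv Equiv.Perm Finset

namespace Setoid

variable {α : Type*} (s t : Setoid α)

def incidenceGraph : SimpleGraph (Quotient s ⊕ Quotient t) :=
  SimpleGraph.fromRel fun u v => ∃ x, u = .inl ⟦x⟧ ∧ v = .inr ⟦x⟧

variable {s t}

theorem incidenceGraph_adj_mk (x : α) : (incidenceGraph s t).Adj (.inl ⟦x⟧) (.inr ⟦x⟧) :=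
  (SimpleGraph.fromRel_adj ..).2 ⟨Sum.inl_ne_inr, .inl ⟨x, rfl, rfl⟩⟩

theorem card_edgeSet_incidenceGraph_le [Finite α] :
    Nat.card (incidenceGraph s t).edgeSet ≤ Nat.card α := by
  refine Nat.card_le_card_of_surjective
    (fun x => ⟨s(.inl ⟦x⟧, .inr ⟦x⟧), incidenceGraph_adj_mk x⟩) fun ⟨e, he⟩ => ?_
  induction e using Sym2.ind with
  | _ u v =>
    rw [SimpleGraph.mem_edgeSet, incidenceGraph, SimpleGraph.fromRel_adj] at he
    obtain ⟨-, ⟨x, rfl, rfl⟩ | ⟨x, rfl, rfl⟩⟩ := he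
    · exact ⟨x, rfl⟩
    · exact ⟨x, Subtype.ext Sym2.eq_swap⟩

theorem incidenceGraph_connected [Nonempty α] (hst : s ⊔ t = ⊤) :
    (incidenceGraph s t).Connected := by
  set G := incidenceGraph s t
  have hle : s ⊔ t ≤ ker fun x => G.connectedComponentMk (.inl ⟦x⟧) := by
    refine sup_le (fun x y hxy => by simp [ker_def, Quotient.sound hxy]) fun x y hxy => ?_
    have hy : G.Reachable (.inl ⟦y⟧) (.inr ⟦x⟧) := by
      rw [Quotient.sound hxy]; exact (incidenceGraph_adj_mk y).reachable
    exact SimpleGraph.ConnectedComponent.eq.2 ((incidenceGraph_adj_mk x).reachable.trans hy.symm)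
  have hreach (x y : α) : G.Reachable (.inl ⟦x⟧) (.inl ⟦y⟧) :=
    SimpleGraph.ConnectedComponent.eq.1 (hle (Setoid.eq_top_iff.1 hst x y))
  obtain ⟨x₀⟩ := ‹Nonempty α›
  refine G.connected_iff_exists_forall_reachable.2 ⟨.inl ⟦x₀⟧, ?_⟩
  rintro (u | u) <;> induction u using Quotient.inductionOn with | _ x => ?_
  · exact hreach x₀ x
  · exact (hreach x₀ x).trans (incidenceGraph_adj_mk x).reachable

theorem card_quotient_add_card_quotient_le [Finite α] (hst : s ⊔ t = ⊤) :
    Nat.card (Quotient s) + Nat.card (Quotient t) ≤ Nat.card α + 1 := by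
  cases isEmpty_or_nonempty α
  · simp
  rw [← Nat.card_sum]
  exact (incidenceGraph_connected hst).card_vert_le_card_edgeSet_add_one.trans
    (Nat.add_le_add_right card_edgeSet_incidenceGraph_le 1)

end Setoid

namespace Equiv.Perm

variable {α : Type*}

theorem SameCycle.setoid_le {f : Perm α} {r : Setoid α} (h : ∀ x, r x (f x)) :
    SameCycle.setoid f ≤ r := by
  rintro x _ ⟨i, rfl⟩
  induction i using Int.induction_on with
  | zero => exact r.refl' x
  | succ i ih => rw [add_comm, zpow_add, zpow_one, mul_apply]; exact r.trans' ih (h _)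
  | pred i ih =>
    have hi := h ((f ^ (-(i : ℤ) - 1)) x)
    rw [← mul_apply, ← zpow_one_add, add_sub_cancel] at hi
    exact r.trans' ih (r.symm' hi)

theorem SameCycle.setoid_mul_le_sup (σ τ : Perm α) :
    SameCycle.setoid (σ * τ) ≤ SameCycle.setoid σ ⊔ SameCycle.setoid τ :=
  SameCycle.setoid_le fun x => (setoid σ ⊔ setoid τ).trans'
    (Setoid.le_def.1 (le_sup_right (a := setoid σ)) (sameCycle_apply_right.2 (.refl τ x)))
    (Setoid.le_def.1 (le_sup_left (b := setoid τ)) (sameCycle_apply_right.2 (.refl σ (τ x))))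

section Fintype

variable [Fintype α] [DecidableEq α]

def cycleLabel (σ : Perm α) (x : α) : Perm α ⊕ α :=
  if σ x = x then .inr x else .inl (σ.cycleOf x)

theorem SameCycle.setoid_eq_ker_cycleLabel (σ : Perm α) :
    SameCycle.setoid σ = Setoid.ker (cycleLabel σ) := by
  ext x y
  rw [Setoid.ker_def]
  by_cases hx : σ x = x <;> by_cases hy : σ y = y <;>
    simp only [cycleLabel, hx, hy, if_true, if_false, reduceCtorEq, Sum.inl.injEq, Sum.inr.injEq,
      iff_false]
  · exact ⟨fun h => h.eq_of_left hx, fun h => h ▸ .refl σ x⟩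
  · exact fun h => hy (h.apply_eq_self_iff.1 hx)
  · exact fun h => hx (h.apply_eq_self_iff.2 hy)
  · exact sameCycle_iff_cycleOf_eq_of_mem_support (mem_support.2 hx) (mem_support.2 hy)

theorem image_cycleLabel (σ : Perm α) :
    univ.image (cycleLabel σ) = σ.cycleFactorsFinset.disjSum {x | σ x = x} := by
  ext (c | x) <;> simp only [mem_image, mem_univ, true_and, inl_mem_disjSum, inr_mem_disjSum,
    mem_filter, cycleLabel]
  · constructor
    · rintro ⟨x, hx⟩
      split_ifs at hx with hfix
      cases hx
      exact cycleOf_mem_cycleFactorsFinset_iff.2 (mem_support.2 hfix)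
    · intro hc
      obtain ⟨a, ha⟩ := (mem_cycleFactorsFinset_iff.1 hc).1.nonempty_support
      refine ⟨a, ?_⟩
      rw [if_neg (mem_support.1 (mem_cycleFactorsFinset_support_le hc ha)), cycle_is_cycleOf ha hc]
  · constructor
    · rintro ⟨y, hy⟩
      split_ifs at hy with hfix
      cases hy
      exact hfix
    · exact fun hx => ⟨x, if_pos hx⟩

theorem card_quotient_sameCycle (σ : Perm α) :
    Nat.card (Quotient (SameCycle.setoid σ)) = σ.cycleType.card + #{x | σ x = x} := by
  rw [SameCycle.setoid_eq_ker_cycleLabel, Nat.card_congr (Setoid.quotientKerEquivRange _),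
    Nat.card_eq_card_toFinset, Set.toFinset_range, image_cycleLabel, card_disjSum, cycleType_def,
    Multiset.card_map]
  rfl

end Fintype

end Equiv.Perm

theorem IsFullCycle.sameCycle_setoid_eq_top {n : ℕ} {π : Perm (Fin n)} (h : IsFullCycle π) :
    SameCycle.setoid π = ⊤ :=
  Setoid.eq_top_iff.2 fun x y =>
    h.1.sameCycle (mem_support.1 (h.2 ▸ mem_univ x)) (mem_support.1 (h.2 ▸ mem_univ y))

theorem cycleCount_eq_card_quotient {n : ℕ} (π : Perm (Fin n)) :
    cycleCount π = Nat.card (Quotient (SameCycle.setoid π)) :=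
  (card_quotient_sameCycle π).symm

theorem stmt_3 (n : ℕ) (σ τ : Equiv.Perm (Fin n)) (h : IsFullCycle (σ * τ)) :
    cycleCount σ + cycleCount τ ≤ n + 1 := by
  have hsup : SameCycle.setoid σ ⊔ SameCycle.setoid τ = ⊤ :=
    top_unique (h.sameCycle_setoid_eq_top ▸ SameCycle.setoid_mul_le_sup σ τ)
  simpa [cycleCount_eq_card_quotient] using Setoid.card_quotient_add_card_quotient_le hsup
end

section
/- Any factorization of a permutation ρ ∈ S_n into transpositions whose factors generate a transitive subgroup of S_n uses at least n + ℓ(ρ) - 2 transpositions, where ℓ(ρ) is the number of cycles of ρ. -/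
open Equiv Equiv.Perm

variable {α : Type*}

/-- the setoid obtained from `s` by merging the classes of `a` and `b`. -/
def mrel (s : Setoid α) (a b : α) : Setoid α where
  r x y := s.r x y ∨ (s.r x a ∧ s.r y b) ∨ (s.r x b ∧ s.r y a)
  iseqv := by
    constructor
    · exact fun x => Or.inl (s.refl x)
    · rintro x y (h | ⟨h1, h2⟩ | ⟨h1, h2⟩)
      · exact Or.inl (s.symm h)
      · exact Or.inr (Or.inr ⟨h2, h1⟩)
      · exact Or.inr (Or.inl ⟨h2, h1⟩)
    · rintro x y z (h | ⟨h1, h2⟩ | ⟨h1, h2⟩) (h' | ⟨h1', h2'⟩ | ⟨h1', h2'⟩)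
      · exact Or.inl (s.trans h h')
      · exact Or.inr (Or.inl ⟨s.trans h h1', h2'⟩)
      · exact Or.inr (Or.inr ⟨s.trans h h1', h2'⟩)
      · exact Or.inr (Or.inl ⟨h1, s.trans (s.symm h') h2⟩)
      · exact Or.inl (s.trans (s.trans (s.trans h1 (s.symm h1')) h2) (s.symm h2'))
      · exact Or.inl (s.trans h1 (s.symm h2'))
      · exact Or.inr (Or.inr ⟨h1, s.trans (s.symm h') h2⟩)
      · exact Or.inl (s.trans h1 (s.symm h2'))
      · exact Or.inl (s.trans (s.trans (s.trans h1 (s.symm h1')) h2) (s.symm h2'))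

lemma mrel_eq_self (s : Setoid α) {a b : α} (h : s.r a b) : mrel s a b = s := by
  apply Setoid.ext
  intro x y
  constructor
  · rintro (h' | ⟨h1, h2⟩ | ⟨h1, h2⟩)
    · exact h'
    · exact s.trans (s.trans h1 h) (s.symm h2)
    · exact s.trans (s.trans h1 (s.symm h)) (s.symm h2)
  · exact Or.inl

lemma card_le_mrel (s : Setoid α) (a b : α) [Finite α] :
    Nat.card (Quotient s) ≤ Nat.card (Quotient (mrel s a b)) + 1 := by
  classical
  have := Fintype.ofFinite α
  let f : Quotient s → (Quotient (mrel s a b)) ⊕ Unit :=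
    Quotient.lift (fun x => if s.r x b then Sum.inr () else Sum.inl (Quotient.mk _ x)) (by
      intro x y hxy
      by_cases hx : s.r x b
      · have hy : s.r y b := s.trans (s.symm hxy) hx
        rw [if_pos hx, if_pos hy]
      · have hy : ¬ s.r y b := fun hy => hx (s.trans hxy hy)
        rw [if_neg hx, if_neg hy]
        exact congrArg _ (Quotient.sound (Or.inl hxy)))
  have hinj : Function.Injective f := by
    intro q q'
    induction q using Quotient.inductionOn
    induction q' using Quotient.inductionOn
    rename_i x y
    simp only [f, Quotient.lift_mk]
    by_cases hx : s.r x b <;> by_cases hy : s.r y b <;>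
      simp only [if_pos, if_neg, hx, hy, if_true, if_false]
    · intro _; exact Quotient.sound (s.trans hx (s.symm hy))
    · intro h; exact absurd h (by simp)
    · intro h; exact absurd h (by simp)
    · intro h
      rcases Quotient.exact (Sum.inl.inj h) with h' | ⟨h1, h2⟩ | ⟨h1, h2⟩
      · exact Quotient.sound h'
      · exact absurd h2 hy
      · exact absurd h1 hx
  calc Nat.card (Quotient s) ≤ Nat.card ((Quotient (mrel s a b)) ⊕ Unit) :=
        Nat.card_le_card_of_injective f hinj
    _ = Nat.card (Quotient (mrel s a b)) + 1 := by simp [Nat.card_sum]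

lemma card_surj_lt {β : Type*} [Finite α] (f : α → β) (hf : Function.Surjective f)
    {u v : α} (huv : u ≠ v) (hfuv : f u = f v) : Nat.card β + 1 ≤ Nat.card α := by
  classical
  have := Fintype.ofFinite α
  have : Fintype β := Fintype.ofSurjective f hf
  rw [Nat.card_eq_fintype_card, Nat.card_eq_fintype_card]
  have h1 : (Finset.univ.image f) = Finset.univ := Finset.image_univ_of_surjective hf
  have h2 : Finset.univ.image f = (Finset.univ.erase u).image f := by
    apply Finset.Subset.antisymm
    · intro x hx
      rcases Finset.mem_image.1 hx with ⟨y, _, rfl⟩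
      by_cases hyu : y = u
      · subst hyu
        exact Finset.mem_image.2 ⟨v, Finset.mem_erase.2 ⟨Ne.symm huv, Finset.mem_univ v⟩,
          hfuv.symm⟩
      · exact Finset.mem_image.2 ⟨y, Finset.mem_erase.2 ⟨hyu, Finset.mem_univ y⟩, rfl⟩
    · exact Finset.image_subset_image (Finset.erase_subset _ _)
  have h3 : Fintype.card β = ((Finset.univ.erase u).image f).card := by
    rw [← h2, h1]; rfl
  have h4 : ((Finset.univ.erase u).image f).card ≤ Fintype.card α - 1 := by
    calc ((Finset.univ.erase u).image f).card ≤ (Finset.univ.erase u).card :=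
          Finset.card_image_le
      _ = Fintype.card α - 1 := by rw [Finset.card_erase_of_mem (Finset.mem_univ u)]; rfl
  have h5 : 1 ≤ Fintype.card α := Fintype.card_pos_iff.2 ⟨u⟩
  omega

/-- coarsening a setoid gives at most as many classes. -/
lemma card_quot_le_of_le {s t : Setoid α} [Finite α] (h : ∀ x y, s.r x y → t.r x y) :
    Nat.card (Quotient t) ≤ Nat.card (Quotient s) :=
  Nat.card_le_card_of_surjective
    (Quotient.lift (fun x => Quotient.mk t x) fun x y hxy => Quotient.sound (h x y hxy))
    (fun q => q.inductionOn fun x => ⟨Quotient.mk s x, rfl⟩)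

lemma card_quot_eq_of_eq {s t : Setoid α} (h : ∀ x y, s.r x y ↔ t.r x y) :
    Nat.card (Quotient s) = Nat.card (Quotient t) := by
  rw [Setoid.ext h]

lemma mrel_card_add_one_le (s : Setoid α) {a b : α} [Finite α] (h : ¬ s.r a b) :
    Nat.card (Quotient (mrel s a b)) + 1 ≤ Nat.card (Quotient s) := by
  let g : Quotient s → Quotient (mrel s a b) :=
    Quotient.lift (fun x => Quotient.mk _ x) fun x y hxy => Quotient.sound (Or.inl hxy)
  refine card_surj_lt g (fun q => q.inductionOn fun x => ⟨Quotient.mk s x, rfl⟩)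
    (u := Quotient.mk s a) (v := Quotient.mk s b) (fun he => h (Quotient.exact he)) ?_
  exact Quotient.sound (Or.inr (Or.inl ⟨s.refl a, s.refl b⟩))

lemma card_quot_eq_card (s : Setoid α) (h : ∀ x y, s.r x y ↔ x = y) :
    Nat.card (Quotient s) = Nat.card α := by
  symm
  apply Nat.card_eq_of_bijective (Quotient.mk s)
  constructor
  · intro x y hxy
    exact (h x y).1 (Quotient.exact hxy)
  · exact fun q => q.inductionOn fun x => ⟨x, rfl⟩

section Perm
variable [DecidableEq α] [Fintype α]

/-- the "same cycle" setoid of a permutation. -/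
def scS (σ : Perm α) : Setoid α :=
  ⟨σ.SameCycle, ⟨SameCycle.refl σ, SameCycle.symm, SameCycle.trans⟩⟩

/-- the orbit setoid of a subgroup of permutations. -/
def orbS (G : Subgroup (Perm α)) : Setoid α where
  r x y := ∃ g ∈ G, g x = y
  iseqv := by
    constructor
    · exact fun x => ⟨1, one_mem G, rfl⟩
    · rintro x y ⟨g, hg, rfl⟩
      exact ⟨g⁻¹, inv_mem hg, Equiv.symm_apply_apply g x⟩
    · rintro x y z ⟨g, hg, rfl⟩ ⟨g', hg', rfl⟩
      exact ⟨g' * g, mul_mem hg' hg, rfl⟩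

lemma sc_le_orb {G : Subgroup (Perm α)} {σ : Perm α} (hσ : σ ∈ G) {x y : α}
    (h : σ.SameCycle x y) : (orbS G).r x y := by
  obtain ⟨i, hi⟩ := h
  exact ⟨σ ^ i, zpow_mem hσ i, hi⟩

lemma rel_zpow (s : Setoid α) (π : Perm α) (h : ∀ x, s.r x (π x)) :
    ∀ (i : ℤ) (x : α), s.r x ((π ^ i) x) := by
  have hnat : ∀ (m : ℕ) (x : α), s.r x ((π ^ m) x) := by
    intro m
    induction m with
    | zero => intro x; simpa using s.refl x
    | succ m ih =>
      intro x
      have : (π ^ (m + 1)) x = π ((π ^ m) x) := by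
        rw [pow_succ']; rfl
      rw [this]
      exact s.trans (ih x) (h _)
  intro i x
  obtain ⟨m, rfl | rfl⟩ := Int.eq_nat_or_neg i
  · rw [zpow_natCast]; exact hnat m x
  · apply s.symm
    have : (π ^ (m : ℕ)) ((π ^ (-(m : ℤ))) x) = x := by
      rw [zpow_neg, zpow_natCast]
      exact Equiv.apply_symm_apply _ x
    conv_rhs => rw [← this]
    exact hnat m _

set_option linter.unusedSectionVars false

lemma step_rel (σ : Perm α) (a b : α) (x : α) :
    (mrel (scS σ) a b).r x ((σ * Equiv.swap a b) x) := by
  by_cases hxa : x = a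
  · rw [hxa]
    have : (σ * Equiv.swap a b) a = σ b := by simp
    rw [this]
    exact Or.inr (Or.inl ⟨(scS σ).refl a, (SameCycle.refl σ b).apply_left⟩)
  · by_cases hxb : x = b
    · rw [hxb]
      have : (σ * Equiv.swap a b) b = σ a := by simp
      rw [this]
      exact Or.inr (Or.inr ⟨(scS σ).refl b, (SameCycle.refl σ a).apply_left⟩)
    · have : (σ * Equiv.swap a b) x = σ x := by
        simp [Equiv.swap_apply_of_ne_of_ne hxa hxb]
      rw [this]
      exact Or.inl ⟨1, by simp⟩

/-- coarse bound: same-cycle in `σ * swap a b` implies merged same-cycle relation of `σ`. -/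
lemma sc_mul_swap_le (σ : Perm α) (a b : α) {x y : α}
    (h : (σ * Equiv.swap a b).SameCycle x y) : (mrel (scS σ) a b).r x y := by
  obtain ⟨i, hi⟩ := h
  have := rel_zpow (mrel (scS σ) a b) (σ * Equiv.swap a b) (step_rel σ a b) i x
  rwa [hi] at this

lemma sc_le_sc_mul_swap (σ : Perm α) (a b : α) {x y : α} (h : σ.SameCycle x y) :
    (mrel (scS (σ * Equiv.swap a b)) a b).r x y := by
  have h2 := sc_mul_swap_le (σ * Equiv.swap a b) a b (x := x) (y := y)
  rw [mul_assoc, Equiv.swap_mul_self, mul_one] at h2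
  exact h2 h

/-- Merge case: if `a, b` are not in the same cycle of `σ`, multiplying by the swap
joins their cycles. -/
lemma sameCycle_mul_swap_self {σ : Perm α} {a b : α} (hab : a ≠ b)
    (h : ¬ σ.SameCycle a b) : (σ * Equiv.swap a b).SameCycle a b := by
  classical
  have hPex : ∃ m : ℕ, (σ ^ (m + 1)) b = b := by
    refine ⟨orderOf σ - 1, ?_⟩
    have h1 : 1 ≤ orderOf σ := orderOf_pos σ
    have : orderOf σ - 1 + 1 = orderOf σ := by omega
    rw [this, pow_orderOf_eq_one]; rfl
  let m₀ := Nat.find hPex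
  have hkey : ∀ j ≤ m₀, ((σ * Equiv.swap a b) ^ (j + 1)) a = (σ ^ (j + 1)) b := by
    intro j
    induction j with
    | zero =>
      intro _
      simp [pow_one]
    | succ j ih =>
      intro hj
      have hjm : j ≤ m₀ := by omega
      have hne1 : (σ ^ (j + 1)) b ≠ b := Nat.find_min hPex (by omega : j < m₀)
      have hne2 : (σ ^ (j + 1)) b ≠ a := by
        intro hcon
        exact h (SameCycle.symm ⟨(j + 1 : ℕ), by rw [zpow_natCast]; exact hcon⟩)
      have hstep : ((σ * Equiv.swap a b) ^ (j + 1 + 1)) a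
          = (σ * Equiv.swap a b) (((σ * Equiv.swap a b) ^ (j + 1)) a) := by
        rw [pow_succ']; rfl
      rw [hstep, ih hjm]
      have : (σ * Equiv.swap a b) ((σ ^ (j + 1)) b) = σ ((σ ^ (j + 1)) b) := by
        simp [Equiv.swap_apply_of_ne_of_ne hne2 hne1]
      have hfin : (σ ^ (j + 1 + 1)) b = σ ((σ ^ (j + 1)) b) := by
        rw [pow_succ' σ (j + 1)]; rfl
      rw [this, hfin]
  refine ⟨((m₀ + 1 : ℕ) : ℤ), ?_⟩
  rw [zpow_natCast, hkey m₀ le_rfl]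
  exact Nat.find_spec hPex

lemma sc_mono_mul_swap {σ : Perm α} {a b : α} (hab : a ≠ b)
    (h : ¬ σ.SameCycle a b) {x y : α} (hxy : σ.SameCycle x y) :
    (σ * Equiv.swap a b).SameCycle x y := by
  have hpt : ∀ x, (scS (σ * Equiv.swap a b)).r x (σ x) := by
    intro z
    by_cases hza : z = a
    · rw [hza]
      have h1 : (σ * Equiv.swap a b).SameCycle a b := sameCycle_mul_swap_self hab h
      have h2 : (σ * Equiv.swap a b).SameCycle b ((σ * Equiv.swap a b) b) :=
        (SameCycle.refl _ b).apply_right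
      have h3 : (σ * Equiv.swap a b) b = σ a := by simp
      rw [h3] at h2
      exact h1.trans h2
    · by_cases hzb : z = b
      · rw [hzb]
        have h1 : (σ * Equiv.swap a b).SameCycle b a :=
          (sameCycle_mul_swap_self hab h).symm
        have h2 : (σ * Equiv.swap a b).SameCycle a ((σ * Equiv.swap a b) a) :=
          (SameCycle.refl _ a).apply_right
        have h3 : (σ * Equiv.swap a b) a = σ b := by simp
        rw [h3] at h2
        exact h1.trans h2
      · have h3 : (σ * Equiv.swap a b) z = σ z := by
          simp [Equiv.swap_apply_of_ne_of_ne hza hzb]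
        rw [← h3]
        exact (SameCycle.refl _ z).apply_right
  obtain ⟨i, hi⟩ := hxy
  have := rel_zpow (scS (σ * Equiv.swap a b)) σ hpt i x
  rwa [hi] at this

lemma orb_insert_swap_eq (S : Set (Perm α)) (a b : α) :
    orbS (Subgroup.closure (insert (Equiv.swap a b) S)) =
      mrel (orbS (Subgroup.closure S)) a b := by
  apply Setoid.ext
  intro x y
  constructor
  · rintro ⟨g, hg, rfl⟩
    suffices hkey : ∀ z, (mrel (orbS (Subgroup.closure S)) a b).r (g z) z from
      (mrel (orbS (Subgroup.closure S)) a b).symm (hkey x)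
    induction hg using Subgroup.closure_induction with
    | mem t ht =>
      intro z
      rcases Set.mem_insert_iff.1 ht with rfl | htS
      · by_cases hza : z = a
        · rw [hza, Equiv.swap_apply_left]
          exact Or.inr (Or.inr ⟨(orbS _).refl b, (orbS _).refl a⟩)
        · by_cases hzb : z = b
          · rw [hzb, Equiv.swap_apply_right]
            exact Or.inr (Or.inl ⟨(orbS _).refl a, (orbS _).refl b⟩)
          · rw [Equiv.swap_apply_of_ne_of_ne hza hzb]
      · exact Or.inl ((orbS (Subgroup.closure S)).symm ⟨t, Subgroup.subset_closure htS, rfl⟩)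
    | one => intro z; simpa using (mrel (orbS (Subgroup.closure S)) a b).refl z
    | mul g1 g2 h1 h2 ih1 ih2 =>
      intro z
      have : (g1 * g2) z = g1 (g2 z) := rfl
      rw [this]
      exact (mrel _ a b).trans (ih1 (g2 z)) (ih2 z)
    | inv g hg ih =>
      intro z
      have := ih (g⁻¹ z)
      rw [show g (g⁻¹ z) = z from Equiv.apply_symm_apply g z] at this
      exact (mrel _ a b).symm this
  · have hmono : ∀ u v, (orbS (Subgroup.closure S)).r u v →
        (orbS (Subgroup.closure (insert (Equiv.swap a b) S))).r u v := by
      rintro u v ⟨g, hg, rfl⟩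
      exact ⟨g, Subgroup.closure_mono (Set.subset_insert _ _) hg, rfl⟩
    have hab : (orbS (Subgroup.closure (insert (Equiv.swap a b) S))).r a b :=
      ⟨Equiv.swap a b, Subgroup.subset_closure (Set.mem_insert _ _),
        Equiv.swap_apply_left a b⟩
    rintro (h | ⟨h1, h2⟩ | ⟨h1, h2⟩)
    · exact hmono _ _ h
    · exact (orbS _).trans (hmono _ _ h1) ((orbS _).trans hab ((orbS _).symm (hmono _ _ h2)))
    · exact (orbS _).trans (hmono _ _ h1)
        ((orbS _).trans ((orbS _).symm hab) ((orbS _).symm (hmono _ _ h2)))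

/-- The main induction: for a list of transpositions. -/
lemma main_list {n : ℕ} (L : List (Perm (Fin n))) (h : ∀ t ∈ L, t.IsSwap) :
    n + Nat.card (Quotient (scS L.prod)) ≤
      L.length + 2 * Nat.card (Quotient (orbS (Subgroup.closure {g | g ∈ L}))) := by
  induction L using List.reverseRecOn with
  | nil =>
    have h1 : Nat.card (Quotient (scS (List.prod ([] : List (Perm (Fin n)))))) = n := by
      rw [card_quot_eq_card _ (fun _ _ => sameCycle_one), Nat.card_eq_fintype_card,
        Fintype.card_fin]
    have h2 : Nat.card (Quotient (orbS (Subgroup.closure {g | g ∈ ([] : List (Perm (Fin n)))}))) = n := by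
      rw [card_quot_eq_card, Nat.card_eq_fintype_card, Fintype.card_fin]
      intro x y
      constructor
      · rintro ⟨g, hg, rfl⟩
        have : g = 1 := by
          have : {g : Perm (Fin n) | g ∈ ([] : List (Perm (Fin n)))} = ∅ := by simp
          rw [this, Subgroup.closure_empty, Subgroup.mem_bot] at hg
          exact hg
        rw [this]; rfl
      · rintro rfl; exact (orbS _).refl x
    rw [h1, h2]
    simp [two_mul]
  | append_singleton M t ih =>
    obtain ⟨a, b, hab, rfl⟩ := h t (by simp)
    have hM : ∀ t ∈ M, Equiv.Perm.IsSwap t := fun t ht => h t (by simp [ht])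
    have IH := ih hM
    have hsets : {g : Perm (Fin n) | g ∈ M ++ [Equiv.swap a b]} =
        insert (Equiv.swap a b) {g | g ∈ M} := by
      ext g; simp [or_comm]
    have horb : orbS (Subgroup.closure {g : Perm (Fin n) | g ∈ M ++ [Equiv.swap a b]}) =
        mrel (orbS (Subgroup.closure {g | g ∈ M})) a b := by
      rw [hsets]; exact orb_insert_swap_eq _ a b
    have hprod : (M ++ [Equiv.swap a b]).prod = M.prod * Equiv.swap a b := by
      simp
    have hlen : (M ++ [Equiv.swap a b]).length = M.length + 1 := by simp
    have hHmrel : Nat.card (Quotient (orbS (Subgroup.closure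
        {g : Perm (Fin n) | g ∈ M ++ [Equiv.swap a b]}))) =
        Nat.card (Quotient (mrel (orbS (Subgroup.closure {g : Perm (Fin n) | g ∈ M})) a b)) := by
      rw [horb]
    have hcG : Nat.card (Quotient (orbS (Subgroup.closure {g : Perm (Fin n) | g ∈ M}))) ≤
        Nat.card (Quotient (orbS (Subgroup.closure
          {g : Perm (Fin n) | g ∈ M ++ [Equiv.swap a b]}))) + 1 := by
      rw [hHmrel]
      exact card_le_mrel _ a b
    rw [hprod, hlen]
    by_cases hsc : M.prod.SameCycle a b
    · -- split case
      have hσG : M.prod ∈ Subgroup.closure {g : Perm (Fin n) | g ∈ M} :=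
        list_prod_mem (fun g hg => Subgroup.subset_closure hg)
      have haGb : (orbS (Subgroup.closure {g : Perm (Fin n) | g ∈ M})).r a b :=
        sc_le_orb hσG hsc
      have hceq : Nat.card (Quotient (orbS (Subgroup.closure
          {g : Perm (Fin n) | g ∈ M ++ [Equiv.swap a b]}))) =
          Nat.card (Quotient (orbS (Subgroup.closure {g : Perm (Fin n) | g ∈ M}))) := by
        rw [hHmrel, mrel_eq_self _ haGb]
      have hl : Nat.card (Quotient (scS (M.prod * Equiv.swap a b))) ≤
          Nat.card (Quotient (scS M.prod)) + 1 := by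
        have h1 : Nat.card (Quotient (scS (M.prod * Equiv.swap a b))) ≤
            Nat.card (Quotient (mrel (scS (M.prod * Equiv.swap a b)) a b)) + 1 :=
          card_le_mrel _ a b
        have h2 : Nat.card (Quotient (mrel (scS (M.prod * Equiv.swap a b)) a b)) ≤
            Nat.card (Quotient (scS M.prod)) :=
          card_quot_le_of_le (fun x y hxy => sc_le_sc_mul_swap M.prod a b hxy)
        omega
      omega
    · -- merge case
      have heq : scS (M.prod * Equiv.swap a b) = mrel (scS M.prod) a b := by
        apply Setoid.ext
        intro x y
        constructor
        · exact sc_mul_swap_le M.prod a b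
        · rintro (h' | ⟨h1, h2⟩ | ⟨h1, h2⟩)
          · exact sc_mono_mul_swap hab hsc h'
          · exact ((sc_mono_mul_swap hab hsc h1).trans
              (sameCycle_mul_swap_self hab hsc)).trans
              (sc_mono_mul_swap hab hsc h2).symm
          · exact ((sc_mono_mul_swap hab hsc h1).trans
              (sameCycle_mul_swap_self hab hsc).symm).trans
              (sc_mono_mul_swap hab hsc h2).symm
      have hl : Nat.card (Quotient (scS (M.prod * Equiv.swap a b))) + 1 ≤
          Nat.card (Quotient (scS M.prod)) := by
        rw [heq]
        exact mrel_card_add_one_le _ hsc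
      omega
end Perm

section Bridge
variable {n : ℕ}

lemma sameCycle_fixed {σ : Perm (Fin n)} {x y : Fin n} (hx : σ x = x)
    (h : σ.SameCycle x y) : y = x := by
  obtain ⟨i, hi⟩ := h
  rw [← hi, Equiv.Perm.zpow_apply_eq_self_of_apply_eq_self hx]

lemma cycleCount_eq_card_quot (σ : Perm (Fin n)) :
    cycleCount σ = Nat.card (Quotient (scS σ)) := by
  classical
  have hct : σ.cycleType.card = σ.cycleFactorsFinset.card := by
    simp [Equiv.Perm.cycleType]
  let F' : Fin n → (Perm (Fin n)) ⊕ (Fin n) := fun x =>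
    if σ x = x then Sum.inr x else Sum.inl (σ.cycleOf x)
  let F : Quotient (scS σ) → (Perm (Fin n)) ⊕ (Fin n) :=
    Quotient.lift F' (by
      intro x y hxy
      dsimp only [F']
      by_cases hx : σ x = x
      · have hy : y = x := sameCycle_fixed hx hxy
        subst hy; rfl
      · have hy : ¬ σ y = y := by
          intro hy
          exact hx (by rw [sameCycle_fixed hy ((scS σ).symm hxy)]; exact hy)
        rw [if_neg hx, if_neg hy, Equiv.Perm.SameCycle.cycleOf_eq hxy])
  have hFinj : Function.Injective F := by
    intro q q'
    induction q using Quotient.inductionOn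
    induction q' using Quotient.inductionOn
    rename_i x y
    show F' x = F' y → _
    dsimp only [F']
    by_cases hx : σ x = x <;> by_cases hy : σ y = y
    · rw [if_pos hx, if_pos hy]
      intro h
      cases h
      rfl
    · rw [if_pos hx, if_neg hy]; intro h; exact absurd h (by simp)
    · rw [if_neg hx, if_pos hy]; intro h; exact absurd h (by simp)
    · rw [if_neg hx, if_neg hy]
      intro h
      have hco : σ.cycleOf x = σ.cycleOf y := Sum.inl.inj h
      apply Quotient.sound
      have hy' : y ∈ (σ.cycleOf y).support :=
        Equiv.Perm.mem_support_cycleOf_iff.2 ⟨SameCycle.refl σ y, Equiv.Perm.mem_support.2 hy⟩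
      rw [← hco] at hy'
      exact (Equiv.Perm.mem_support_cycleOf_iff.1 hy').1
  have hcard : Nat.card (Quotient (scS σ)) = Nat.card (Set.range F') := by
    have h1 : Set.range F = Set.range F' := by
      apply Set.Subset.antisymm
      · rintro z ⟨q, rfl⟩
        exact q.inductionOn fun x => ⟨x, rfl⟩
      · rintro z ⟨x, rfl⟩
        exact ⟨Quotient.mk _ x, rfl⟩
    rw [← Nat.card_range_of_injective hFinj, h1]
  rw [hcard]
  have h2 : Set.range F' = ↑(Finset.univ.image F') := by
    rw [Finset.coe_image, Finset.coe_univ, Set.image_univ]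
  rw [h2, Nat.card_coe_set_eq, Set.ncard_coe_finset]
  have hsplit : (Finset.univ : Finset (Fin n)) =
      σ.support ∪ Finset.univ.filter (fun x => σ x = x) := by
    ext x
    simp [Equiv.Perm.mem_support, em']
  rw [hsplit, Finset.image_union]
  have hdisj : Disjoint (σ.support.image F')
      ((Finset.univ.filter (fun x => σ x = x)).image F') := by
    rw [Finset.disjoint_left]
    rintro z hz1 hz2
    rcases Finset.mem_image.1 hz1 with ⟨x, hx, rfl⟩
    rcases Finset.mem_image.1 hz2 with ⟨y, hy, hxy⟩
    have hx' : ¬ σ x = x := Equiv.Perm.mem_support.1 hx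
    have hy' : σ y = y := (Finset.mem_filter.1 hy).2
    dsimp only [F'] at hxy
    rw [if_neg hx', if_pos hy'] at hxy
    exact absurd hxy (by simp)
  rw [Finset.card_union_of_disjoint hdisj]
  have hc1 : (σ.support.image F').card = σ.cycleFactorsFinset.card := by
    have himage : σ.support.image F' = σ.cycleFactorsFinset.image Sum.inl := by
      ext z
      simp only [Finset.mem_image]
      constructor
      · rintro ⟨x, hx, rfl⟩
        have hx' : ¬ σ x = x := Equiv.Perm.mem_support.1 hx
        refine ⟨σ.cycleOf x, Equiv.Perm.cycleOf_mem_cycleFactorsFinset_iff.2 hx, ?_⟩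
        dsimp only [F']
        rw [if_neg hx']
      · rintro ⟨c, hc, rfl⟩
        have hcyc := (Equiv.Perm.mem_cycleFactorsFinset_iff.1 hc).1
        obtain ⟨x, hx⟩ := hcyc.nonempty_support
        have hxσ : x ∈ σ.support := Equiv.Perm.mem_cycleFactorsFinset_support_le hc hx
        refine ⟨x, hxσ, ?_⟩
        dsimp only [F']
        rw [if_neg (Equiv.Perm.mem_support.1 hxσ), ← Equiv.Perm.cycle_is_cycleOf hx hc]
    rw [himage, Finset.card_image_of_injective _ Sum.inl_injective]
  have hc2 : ((Finset.univ.filter (fun x => σ x = x)).image F').card =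
      (Finset.univ.filter (fun x => σ x = x)).card := by
    apply Finset.card_image_of_injOn
    intro x hx y hy hxy
    dsimp only [F'] at hxy
    rw [if_pos (Finset.mem_filter.1 hx).2, if_pos (Finset.mem_filter.1 hy).2] at hxy
    exact Sum.inr.inj hxy
  rw [hc1, hc2, cycleCount, hct]
end Bridge

/-- The factors generate a subgroup acting transitively on `{1,…,n}`. -/
def TransitiveFactors {n k : ℕ} (τ : Fin k → Equiv.Perm (Fin n)) : Prop :=
  ∀ x y : Fin n, ∃ g ∈ Subgroup.closure (Set.range τ), g x = y

theorem stmt_5 (n k : ℕ) (hn : 1 ≤ n) (ρ : Equiv.Perm (Fin n))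
    (τ : Fin k → Equiv.Perm (Fin n)) (hswap : ∀ i, (τ i).IsSwap)
    (hprod : (List.ofFn τ).prod = ρ) (htrans : TransitiveFactors τ) :
    n + cycleCount ρ ≤ k + 2 := by
  classical
  have hL : {g : Perm (Fin n) | g ∈ List.ofFn τ} = Set.range τ := by
    ext g; simp [List.mem_ofFn]
  have hmain := main_list (List.ofFn τ) (by
    intro t ht
    rcases Set.mem_range.1 ((List.mem_ofFn' τ t).1 ht) with ⟨i, rfl⟩
    exact hswap i)
  rw [hprod, List.length_ofFn, hL] at hmain
  have hne : Nonempty (Fin n) := ⟨⟨0, hn⟩⟩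
  have hsub : Subsingleton (Quotient (orbS (Subgroup.closure (Set.range τ)))) := by
    constructor
    intro q q'
    induction q using Quotient.inductionOn
    induction q' using Quotient.inductionOn
    rename_i x y
    obtain ⟨g, hg, hgx⟩ := htrans x y
    exact Quotient.sound ⟨g, hg, hgx⟩
  have hone : Nat.card (Quotient (orbS (Subgroup.closure (Set.range τ)))) = 1 :=
    Nat.card_eq_one_iff_unique.2 ⟨hsub, Nonempty.map (Quotient.mk _) hne⟩
  rw [hone] at hmain
  rw [cycleCount_eq_card_quot]
  omega
end

section
/- The number of semistandard Young tableaux interpretation of Schur functions is symmetric: for any partition λ and any finite number of variables, the generating polynomial s_λ(x_1,...,x_N) = ∑_{T} ∏_{(i,j)∈λ} x_{T(i,j)}, summed over semistandard tableaux of shape λ with entries in {1,...,N}, is a symmetric polynomial in x_1,...,x_N. -/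
open scoped Classical

/-- A filling of the cells of a Young diagram `μ` by entries in `Fin N` is
semistandard if rows weakly increase left to right and columns strictly
increase top to bottom. -/
def IsSSYT {N : ℕ} (μ : YoungDiagram) (T : ↥μ.cells → Fin N) : Prop :=
  (∀ (i j j' : ℕ) (h : (i, j) ∈ μ.cells) (h' : (i, j') ∈ μ.cells),
      j ≤ j' → T ⟨(i, j), h⟩ ≤ T ⟨(i, j'), h'⟩) ∧
  (∀ (i i' j : ℕ) (h : (i, j) ∈ μ.cells) (h' : (i', j) ∈ μ.cells),
      i < i' → T ⟨(i, j), h⟩ < T ⟨(i', j), h'⟩)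

namespace BKaux

variable {N : ℕ} {μ : YoungDiagram}

/-- A helper: down-closed finsets of naturals are initial ranges. -/
lemma downclosed_eq_range (S : Finset ℕ) (h : ∀ j j', j ≤ j' → j' ∈ S → j ∈ S) :
    S = Finset.range S.card := by
  refine (Finset.eq_of_subset_of_card_le ?_ (by simp)).symm
  intro j hj
  rw [Finset.mem_range] at hj
  by_contra hjS
  have hsub : S ⊆ Finset.range j := by
    intro s hs
    rw [Finset.mem_range]
    by_contra hsj
    exact hjS (h j s (by omega) hs)
  have := Finset.card_le_card hsub
  simp only [Finset.card_range] at this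
  omega

/-- Total-function version of a filling. -/
noncomputable def tf (T : ↥μ.cells → Fin N) : ℕ → ℕ → ℕ :=
  fun i j => if h : (i, j) ∈ μ.cells then ((T ⟨(i, j), h⟩ : Fin N) : ℕ) else N

lemma tf_apply (T : ↥μ.cells → Fin N) (p : ℕ × ℕ) (h : p ∈ μ.cells) :
    tf T p.1 p.2 = ((T ⟨p, h⟩ : Fin N) : ℕ) := by
  cases p; simp [tf, h]

lemma tf_lt (T : ↥μ.cells → Fin N) {i j : ℕ} (h : (i, j) ∈ μ.cells) :
    tf T i j < N := by
  rw [tf_apply T (i, j) h]; exact (T _).isLt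

lemma tf_out (T : ↥μ.cells → Fin N) {i j : ℕ} (h : ¬ (i, j) ∈ μ.cells) :
    tf T i j = N := by simp [tf, h]

lemma tf_row {T : ↥μ.cells → Fin N} (hT : IsSSYT μ T) {i j j' : ℕ}
    (hjj : j ≤ j') (h' : (i, j') ∈ μ.cells) : tf T i j ≤ tf T i j' := by
  have h : (i, j) ∈ μ.cells := by
    rw [YoungDiagram.mem_cells] at h' ⊢
    exact μ.up_left_mem le_rfl hjj h'
  rw [tf_apply T (i, j) h, tf_apply T (i, j') h']
  exact hT.1 i j j' h h' hjj

lemma tf_col {T : ↥μ.cells → Fin N} (hT : IsSSYT μ T) {i i' j : ℕ}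
    (hii : i < i') (h' : (i', j) ∈ μ.cells) : tf T i j < tf T i' j := by
  have h : (i, j) ∈ μ.cells := by
    rw [YoungDiagram.mem_cells] at h' ⊢
    exact μ.up_left_mem (le_of_lt hii) le_rfl h'
  rw [tf_apply T (i, j) h, tf_apply T (i', j) h']
  exact hT.2 i i' j h h' hii

/-- Build SSYT from the total-function conditions (column: adjacent rows suffice). -/
lemma isSSYT_of_tf {S : ↥μ.cells → Fin N}
    (h1 : ∀ i j j', j ≤ j' → (i, j') ∈ μ.cells → tf S i j ≤ tf S i j')
    (h2 : ∀ i j, (i + 1, j) ∈ μ.cells → tf S i j < tf S (i + 1) j) :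
    IsSSYT μ S := by
  constructor
  · intro i j j' h h' hjj
    have := h1 i j j' hjj h'
    rw [tf_apply S (i, j) h, tf_apply S (i, j') h'] at this
    exact this
  · intro i i' j h h' hii
    have key : ∀ d i, (i + d + 1, j) ∈ μ.cells → tf S i j < tf S (i + d + 1) j := by
      intro d
      induction d with
      | zero => intro i hi; exact h2 i j hi
      | succ d ih =>
        intro i hi
        have hmid : (i + d + 1, j) ∈ μ.cells := by
          rw [YoungDiagram.mem_cells] at hi ⊢
          exact μ.up_left_mem (by omega) le_rfl hi
        have he : i + (d + 1) + 1 = (i + d + 1) + 1 := by omega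
        rw [he] at hi ⊢
        exact lt_trans (ih i hmid) (h2 (i + d + 1) j hi)
    obtain ⟨d, rfl⟩ : ∃ d, i' = i + d + 1 := ⟨i' - i - 1, by omega⟩
    have := key d i h'
    rw [tf_apply S (i, j) h, tf_apply S (i + d + 1, j) h'] at this
    exact this

/-- Row threshold: number of entries in row `i` that are `< v`. -/
noncomputable def thv (T : ↥μ.cells → Fin N) (i v : ℕ) : ℕ :=
  ((Finset.range (μ.rowLen i)).filter fun j => tf T i j < v).card

lemma thv_le (T : ↥μ.cells → Fin N) (i v : ℕ) : thv T i v ≤ μ.rowLen i := by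
  refine le_trans (Finset.card_filter_le _ _) (by simp)

lemma thv_mono (T : ↥μ.cells → Fin N) (i : ℕ) {v v' : ℕ} (h : v ≤ v') :
    thv T i v ≤ thv T i v' :=
  Finset.card_le_card (by
    intro j hj
    simp only [Finset.mem_filter] at hj ⊢
    exact ⟨hj.1, by omega⟩)

lemma thv_char {T : ↥μ.cells → Fin N} (hT : IsSSYT μ T) (i v j : ℕ) :
    j < thv T i v ↔ (j < μ.rowLen i ∧ tf T i j < v) := by
  have hdc := downclosed_eq_range
    ((Finset.range (μ.rowLen i)).filter fun j => tf T i j < v) (by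
      intro j j' hjj hj'
      simp only [Finset.mem_filter, Finset.mem_range] at hj' ⊢
      refine ⟨by omega, lt_of_le_of_lt (tf_row hT hjj ?_) hj'.2⟩
      rw [YoungDiagram.mem_cells, YoungDiagram.mem_iff_lt_rowLen]
      exact hj'.1)
  constructor
  · intro hj
    have h2 : j ∈ Finset.range (((Finset.range (μ.rowLen i)).filter
        fun j => tf T i j < v).card) := Finset.mem_range.2 hj
    rw [← hdc, Finset.mem_filter, Finset.mem_range] at h2
    exact h2
  · intro hj
    have h2 : j ∈ (Finset.range (μ.rowLen i)).filter fun j => tf T i j < v := by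
      rw [Finset.mem_filter, Finset.mem_range]; exact hj
    rw [hdc, Finset.mem_range] at h2
    exact h2

lemma thv_col {T : ↥μ.cells → Fin N} (hT : IsSSYT μ T) (i v : ℕ) :
    thv T (i + 1) (v + 1) ≤ thv T i v := by
  by_contra hc
  push_neg at hc
  set j := thv T i v with hj
  have h1 : j < thv T (i + 1) (v + 1) := hc
  rw [thv_char hT] at h1
  have hmem : (i + 1, j) ∈ μ.cells := by
    rw [YoungDiagram.mem_cells, YoungDiagram.mem_iff_lt_rowLen]; exact h1.1
  have h2 : tf T i j < v := lt_of_lt_of_le (tf_col hT (by omega) hmem) (by omega)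
  have hmem' : (i, j) ∈ μ.cells := by
    rw [YoungDiagram.mem_cells] at hmem ⊢
    exact μ.up_left_mem (by omega) le_rfl hmem
  have : j < thv T i v := by
    rw [thv_char hT]
    exact ⟨by rw [← YoungDiagram.mem_iff_lt_rowLen, ← YoungDiagram.mem_cells]; exact hmem', h2⟩
  omega

section BK

variable (a : ℕ)

/-- `L` bound for Bender–Knuth. -/
noncomputable def LF (T : ↥μ.cells → Fin N) (i : ℕ) : ℕ :=
  max (thv T i a) (thv T (i + 1) (a + 2))

/-- `U` bound for Bender–Knuth. -/
noncomputable def UF (T : ↥μ.cells → Fin N) : ℕ → ℕ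
  | 0 => thv T 0 (a + 2)
  | (i + 1) => min (thv T i a) (thv T (i + 1) (a + 2))

/-- the reflected middle threshold. -/
noncomputable def mF' (T : ↥μ.cells → Fin N) (i : ℕ) : ℕ :=
  LF a T i + UF a T i - thv T i (a + 1)

variable {T : ↥μ.cells → Fin N}

lemma LF_le (hT : IsSSYT μ T) (i : ℕ) : LF a T i ≤ thv T i (a + 1) :=
  max_le (thv_mono T i (by omega)) (thv_col hT i (a + 1))

lemma le_UF (hT : IsSSYT μ T) (i : ℕ) : thv T i (a + 1) ≤ UF a T i := by
  cases i with
  | zero => exact thv_mono T 0 (by omega)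
  | succ i => exact le_min (thv_col hT i a) (thv_mono T (i + 1) (by omega))

lemma cF_le_mF' (hT : IsSSYT μ T) (i : ℕ) : thv T i a ≤ mF' a T i := by
  have h1 := LF_le a hT i
  have h2 := le_UF a hT i
  have h3 : thv T i a ≤ LF a T i := le_max_left _ _
  rw [mF']; omega

lemma mF'_le_dF (hT : IsSSYT μ T) (i : ℕ) : mF' a T i ≤ thv T i (a + 2) := by
  have h1 := LF_le a hT i
  have h2 := le_UF a hT i
  have h3 : UF a T i ≤ thv T i (a + 2) := by
    cases i with
    | zero => exact le_rfl
    | succ i => exact min_le_right _ _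
  rw [mF']; omega

end BK

variable {k k' : Fin N}

/-- The Bender–Knuth involution. -/
noncomputable def bk (k k' : Fin N) (T : ↥μ.cells → Fin N) : ↥μ.cells → Fin N :=
  fun c => if T c = k ∨ T c = k' then
      (if c.1.2 < mF' (k : ℕ) T c.1.1 then k else k') else T c

lemma tf_bk (hk : (k' : ℕ) = (k : ℕ) + 1) (T : ↥μ.cells → Fin N) (i j : ℕ) :
    tf (bk k k' T) i j =
      if tf T i j = (k : ℕ) ∨ tf T i j = (k : ℕ) + 1 then
        (if j < mF' (k : ℕ) T i then (k : ℕ) else (k : ℕ) + 1)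
      else tf T i j := by
  by_cases h : (i, j) ∈ μ.cells
  · rw [tf_apply _ (i, j) h, tf_apply T (i, j) h]
    rw [bk]
    have hval : (T ⟨(i, j), h⟩ = k ∨ T ⟨(i, j), h⟩ = k') ↔
        (((T ⟨(i, j), h⟩ : Fin N) : ℕ) = (k : ℕ) ∨ ((T ⟨(i, j), h⟩ : Fin N) : ℕ) = (k : ℕ) + 1) := by
      rw [Fin.ext_iff, Fin.ext_iff, hk]
    split_ifs with h1 h2 h2 <;> simp_all <;> omega
  · rw [tf_out _ h, tf_out T h]
    have hkN : (k : ℕ) + 1 < N := by rw [← hk]; exact k'.isLt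
    have : ¬ ((N = (k : ℕ)) ∨ (N = (k : ℕ) + 1)) := by omega
    rw [if_neg this]

lemma UF_zero (a : ℕ) (T : ↥μ.cells → Fin N) : UF a T 0 = thv T 0 (a + 2) := rfl

lemma UF_succ (a : ℕ) (T : ↥μ.cells → Fin N) (i : ℕ) :
    UF a T (i + 1) = min (thv T i a) (thv T (i + 1) (a + 2)) := rfl

lemma rowLen_zero {i : ℕ} (h : μ.colLen 0 ≤ i) : μ.rowLen i = 0 := by
  by_contra h0
  have h1 : (i, 0) ∈ μ := YoungDiagram.mem_iff_lt_rowLen.2 (Nat.pos_of_ne_zero h0)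
  have := YoungDiagram.mem_iff_lt_colLen.1 h1
  omega

/-- Generic counting between two thresholds. -/
lemma count_eq_sub {u : ℕ → ℕ} {rl A B w : ℕ}
    (hA : ∀ j, j < A ↔ (j < rl ∧ u j < w)) (hB : ∀ j, j < B ↔ (j < rl ∧ u j < w + 1)) :
    ((Finset.range rl).filter fun j => u j = w).card = B - A := by
  have hAB : A ≤ B := by
    by_contra hc
    have h1 := (hA B).1 (by omega)
    have h2 := (hB B).2 ⟨h1.1, by omega⟩
    omega
  have heq : (Finset.range rl).filter (fun j => u j = w) = Finset.range B \ Finset.range A := by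
    ext j
    simp only [Finset.mem_filter, Finset.mem_sdiff, Finset.mem_range]
    have h1 := hA j
    have h2 := hB j
    omega
  rw [heq, Finset.card_sdiff_of_subset (Finset.range_subset_range.2 hAB),
    Finset.card_range, Finset.card_range]

lemma bk_apply (T : ↥μ.cells → Fin N) (c : ↥μ.cells) :
    bk k k' T c = if T c = k ∨ T c = k' then
      (if c.1.2 < mF' (k : ℕ) T c.1.1 then k else k') else T c := rfl

section Main

variable {T : ↥μ.cells → Fin N} (hk : (k' : ℕ) = (k : ℕ) + 1) (hT : IsSSYT μ T)

/-- The modified thresholds. -/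
noncomputable def Th (a : ℕ) (T : ↥μ.cells → Fin N) (i v : ℕ) : ℕ :=
  if v = a + 1 then mF' a T i else thv T i v

include hT in
lemma Th_le_rowLen (i v : ℕ) : Th (k : ℕ) T i v ≤ μ.rowLen i := by
  rw [Th]
  split_ifs with h
  · exact le_trans (mF'_le_dF _ hT i) (thv_le T i _)
  · exact thv_le T i v

include hk hT in
lemma Th_char (i v j : ℕ) :
    j < Th (k : ℕ) T i v ↔ (j < μ.rowLen i ∧ tf (bk k k' T) i j < v) := by
  by_cases hj : j < μ.rowLen i
  · have h1 := thv_char hT i (k : ℕ) j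
    have h2 := thv_char hT i ((k : ℕ) + 1) j
    have h3 := thv_char hT i ((k : ℕ) + 2) j
    have hv := thv_char hT i v j
    have hc1 := cF_le_mF' (k : ℕ) hT i
    have hc2 := mF'_le_dF (k : ℕ) hT i
    rw [Th, tf_bk hk]
    split_ifs with hva ht hjm ht hjm <;> omega
  · have hle := Th_le_rowLen (k := k) hT i v
    constructor
    · intro h; omega
    · intro h; exact absurd h.1 hj

include hk hT in
lemma Th_col (i v : ℕ) : Th (k : ℕ) T (i + 1) (v + 1) ≤ Th (k : ℕ) T i v := by
  set a : ℕ := (k : ℕ) with ha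
  rw [Th, Th]
  have hL := LF_le a hT (i + 1)
  have hU := le_UF a hT i
  split_ifs with h1 h2 h2
  · omega
  · -- v = a
    have hv : v = a := by omega
    have hm' : mF' a T (i + 1) ≤ UF a T (i + 1) := by rw [mF']; omega
    rw [UF_succ] at hm'
    subst hv
    exact le_trans hm' (min_le_left _ _)
  · -- v = a + 1
    subst h2
    have hd : thv T (i + 1) (a + 1 + 1) ≤ LF a T i := le_max_right _ _
    have hU' := le_UF a hT i
    have : LF a T i ≤ mF' a T i := by rw [mF']; omega
    exact le_trans hd this
  · exact thv_col hT i v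

include hk hT in
lemma bk_ssyt : IsSSYT μ (bk k k' T) := by
  apply isSSYT_of_tf
  · intro i j j' hjj hmem'
    by_contra hcon
    push_neg at hcon
    have hj' : j' < μ.rowLen i := by
      rw [← YoungDiagram.mem_iff_lt_rowLen, ← YoungDiagram.mem_cells]; exact hmem'
    have h1 : j' < Th (k : ℕ) T i (tf (bk k k' T) i j) :=
      (Th_char hk hT i _ j').2 ⟨hj', hcon⟩
    have h2 := (Th_char hk hT i (tf (bk k k' T) i j) j).1 (by omega)
    omega
  · intro i j hmem
    have hj : j < μ.rowLen (i + 1) := by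
      rw [← YoungDiagram.mem_iff_lt_rowLen, ← YoungDiagram.mem_cells]; exact hmem
    have h1 : j < Th (k : ℕ) T (i + 1) (tf (bk k k' T) (i + 1) j + 1) :=
      (Th_char hk hT (i + 1) _ j).2 ⟨hj, by omega⟩
    have h2 := lt_of_lt_of_le h1 (Th_col hk hT i (tf (bk k k' T) (i + 1) j))
    exact ((Th_char hk hT i _ j).1 h2).2

include hk hT in
lemma thv_bk (i v : ℕ) : thv (bk k k' T) i v = Th (k : ℕ) T i v := by
  have hfil : (Finset.range (μ.rowLen i)).filter (fun j => tf (bk k k' T) i j < v)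
      = Finset.range (Th (k : ℕ) T i v) := by
    ext j
    simp only [Finset.mem_filter, Finset.mem_range]
    exact (Th_char hk hT i v j).symm
  rw [thv, hfil, Finset.card_range]

include hk hT in
lemma mF'_bk (i : ℕ) : mF' (k : ℕ) (bk k k' T) i = thv T i ((k : ℕ) + 1) := by
  set a : ℕ := (k : ℕ) with ha
  have ea : ∀ i', thv (bk k k' T) i' a = thv T i' a := fun i' => by
    rw [thv_bk hk hT, Th, if_neg (by omega)]
  have ed : ∀ i', thv (bk k k' T) i' (a + 2) = thv T i' (a + 2) := fun i' => by
    rw [thv_bk hk hT, Th, if_neg (by omega)]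
  have em : thv (bk k k' T) i (a + 1) = mF' a T i := by
    rw [thv_bk hk hT, Th, if_pos rfl]
  have hL : LF a (bk k k' T) i = LF a T i := by rw [LF, LF, ea, ed]
  have hU : UF a (bk k k' T) i = UF a T i := by
    cases i with
    | zero => rw [UF_zero, UF_zero, ed]
    | succ i => rw [UF_succ, UF_succ, ea, ed]
  have h1 := LF_le a hT i
  have h2 := le_UF a hT i
  rw [mF', hL, hU, em, mF']
  omega

include hk hT in
lemma bk_bk : bk k k' (bk k k' T) = T := by
  set a : ℕ := (k : ℕ) with ha
  funext c
  obtain ⟨⟨i, j⟩, hc⟩ := c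
  by_cases hTc : T ⟨(i, j), hc⟩ = k ∨ T ⟨(i, j), hc⟩ = k'
  · have hbkc : bk k k' T ⟨(i, j), hc⟩ = k ∨ bk k k' T ⟨(i, j), hc⟩ = k' := by
      rw [bk_apply, if_pos hTc]
      split_ifs
      · left; rfl
      · right; rfl
    rw [bk_apply, if_pos hbkc]
    show (if j < mF' (k : ℕ) (bk k k' T) i then k else k') = T ⟨(i, j), hc⟩
    rw [mF'_bk hk hT]
    have hjrl : j < μ.rowLen i := by
      rw [← YoungDiagram.mem_iff_lt_rowLen, ← YoungDiagram.mem_cells]; exact hc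
    have htf : tf T i j = ((T ⟨(i, j), hc⟩ : Fin N) : ℕ) := tf_apply T (i, j) hc
    rcases hTc with h | h
    · have hlt : j < thv T i (a + 1) := (thv_char hT i (a + 1) j).2
        ⟨hjrl, by rw [htf, h]; omega⟩
      rw [if_pos hlt, h]
    · have hval : tf T i j = a + 1 := by rw [htf, h, hk]
      have hnlt : ¬ j < thv T i (a + 1) := by
        intro hlt
        have := (thv_char hT i (a + 1) j).1 hlt
        omega
      rw [if_neg hnlt, h]
  · have hbkc : bk k k' T ⟨(i, j), hc⟩ = T ⟨(i, j), hc⟩ := by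
      rw [bk_apply, if_neg hTc]
    rw [bk_apply, hbkc, if_neg hTc]

end Main

/-- Weight of a filling at a value. -/
noncomputable def wtS (S : ↥μ.cells → Fin N) (v : Fin N) : ℕ :=
  (Finset.univ.filter fun c => S c = v).card

lemma prod_wt (x : Fin N → ℚ) (S : ↥μ.cells → Fin N) :
    ∏ c : ↥μ.cells, x (S c) = ∏ v : Fin N, x v ^ wtS S v := by
  rw [← Finset.prod_fiberwise_of_maps_to (g := S) (t := Finset.univ)
    (fun c _ => Finset.mem_univ _) (fun c => x (S c))]
  refine Finset.prod_congr rfl fun v _ => ?_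
  rw [wtS, ← Finset.prod_const]
  refine Finset.prod_congr rfl fun c hc => ?_
  rw [(Finset.mem_filter.1 hc).2]

lemma card_rows (P : ℕ × ℕ → Prop) [DecidablePred P] :
    (μ.cells.filter fun p => P p).card
      = ∑ i ∈ Finset.range (μ.colLen 0),
          ((Finset.range (μ.rowLen i)).filter fun j => P (i, j)).card := by
  rw [Finset.card_eq_sum_card_fiberwise (f := Prod.fst) (t := Finset.range (μ.colLen 0))]
  · refine Finset.sum_congr rfl fun i _ => ?_
    refine Finset.card_bij' (fun p _ => p.2) (fun j _ => (i, j)) ?_ ?_ ?_ ?_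
    · intro p hp
      simp only [Finset.mem_filter] at hp ⊢
      obtain ⟨⟨hpc, hpP⟩, hpi⟩ := hp
      have : p = (i, p.2) := by
        rw [← hpi]
      rw [Finset.mem_range, ← YoungDiagram.mem_iff_lt_rowLen]
      constructor
      · rw [← YoungDiagram.mem_cells, ← this]; exact hpc
      · rw [← this]; exact hpP
    · intro j hj
      rw [Finset.mem_filter, Finset.mem_range] at hj
      rw [Finset.mem_filter, Finset.mem_filter]
      exact ⟨⟨by rw [YoungDiagram.mem_cells, YoungDiagram.mem_iff_lt_rowLen]; exact hj.1,
        hj.2⟩, rfl⟩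
    · intro p hp
      simp only [Finset.mem_filter] at hp
      exact Prod.ext_iff.mpr ⟨hp.2.symm, rfl⟩
    · intro j hj
      rfl
  · intro p hp
    simp only [Finset.mem_coe, Finset.mem_filter] at hp ⊢
    have h1 : p ∈ μ := (YoungDiagram.mem_cells p).1 hp.1
    have h2 : (p.1, (0 : ℕ)) ∈ μ := μ.up_left_mem le_rfl (Nat.zero_le _) (by
      rwa [show (p.1, p.2) = p from rfl])
    rw [Finset.mem_range]
    exact YoungDiagram.mem_iff_lt_colLen.1 h2

lemma wt_rows (S : ↥μ.cells → Fin N) (w : Fin N) :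
    wtS S w = ∑ i ∈ Finset.range (μ.colLen 0),
        ((Finset.range (μ.rowLen i)).filter fun j => tf S i j = (w : ℕ)).card := by
  have step1 : wtS S w = (μ.cells.filter fun p => tf S p.1 p.2 = (w : ℕ)).card := by
    rw [wtS]
    refine Finset.card_bij' (fun c _ => (c : ℕ × ℕ)) (fun p hp => ⟨p, (Finset.mem_filter.1 hp).1⟩)
      ?_ ?_ ?_ ?_
    · intro c hc
      simp only [Finset.mem_filter] at hc ⊢
      refine ⟨c.2, ?_⟩
      rw [tf_apply S (c : ℕ × ℕ) c.2]
      exact congrArg Fin.val hc.2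
    · intro p hp
      simp only [Finset.mem_filter, Finset.mem_univ, true_and]
      have := (Finset.mem_filter.1 hp).2
      rw [tf_apply S p (Finset.mem_filter.1 hp).1] at this
      exact Fin.ext this
    · intro c _; rfl
    · intro p _; rfl
  exact step1.trans (card_rows _)

section Sums

variable {T : ↥μ.cells → Fin N} (hk : (k' : ℕ) = (k : ℕ) + 1) (hT : IsSSYT μ T)

include hT in
lemma master_sum :
    ∑ i ∈ Finset.range (μ.colLen 0), (mF' (k : ℕ) T i + thv T i ((k : ℕ) + 1))
      = ∑ i ∈ Finset.range (μ.colLen 0), (thv T i (k : ℕ) + thv T i ((k : ℕ) + 2)) := by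
  set a : ℕ := (k : ℕ) with ha
  have step1 : ∀ i, mF' a T i + thv T i (a + 1) = LF a T i + UF a T i := by
    intro i
    have h1 := LF_le a hT i
    have h2 := le_UF a hT i
    rw [mF']
    omega
  rw [Finset.sum_congr rfl (fun i _ => step1 i)]
  rcases Nat.eq_zero_or_pos (μ.colLen 0) with h0 | hpos
  · rw [h0]; simp
  obtain ⟨n, hn⟩ : ∃ n, μ.colLen 0 = n + 1 := ⟨μ.colLen 0 - 1, by omega⟩
  rw [hn]
  have hdz : thv T (n + 1) (a + 2) = 0 := by
    have h1 : μ.rowLen (n + 1) = 0 := rowLen_zero (by omega)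
    have h2 := thv_le T (n + 1) (a + 2)
    omega
  have hU : ∑ i ∈ Finset.range (n + 1), UF a T i
      = (∑ i ∈ Finset.range n, min (thv T i a) (thv T (i + 1) (a + 2))) + thv T 0 (a + 2) := by
    rw [Finset.sum_range_succ']
    simp only [UF_succ, UF_zero]
  have hL : ∑ i ∈ Finset.range (n + 1), LF a T i
      = (∑ i ∈ Finset.range n, max (thv T i a) (thv T (i + 1) (a + 2))) + thv T n a := by
    rw [Finset.sum_range_succ]
    congr 1
    rw [LF, hdz]
    exact Nat.max_zero _
  have hsplit : ∑ i ∈ Finset.range (n + 1), (LF a T i + UF a T i)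
      = (∑ i ∈ Finset.range (n + 1), LF a T i) + ∑ i ∈ Finset.range (n + 1), UF a T i :=
    Finset.sum_add_distrib
  have hmm : (∑ i ∈ Finset.range n, max (thv T i a) (thv T (i + 1) (a + 2)))
      + ∑ i ∈ Finset.range n, min (thv T i a) (thv T (i + 1) (a + 2))
      = (∑ i ∈ Finset.range n, thv T i a) + ∑ i ∈ Finset.range n, thv T (i + 1) (a + 2) := by
    rw [← Finset.sum_add_distrib, ← Finset.sum_add_distrib]
    refine Finset.sum_congr rfl fun i _ => ?_
    rw [max_add_min]
  have hrhs : ∑ i ∈ Finset.range (n + 1), (thv T i a + thv T i (a + 2))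
      = (∑ i ∈ Finset.range (n + 1), thv T i a) + ∑ i ∈ Finset.range (n + 1), thv T i (a + 2) :=
    Finset.sum_add_distrib
  have hc : ∑ i ∈ Finset.range (n + 1), thv T i a
      = (∑ i ∈ Finset.range n, thv T i a) + thv T n a := Finset.sum_range_succ _ _
  have hd : ∑ i ∈ Finset.range (n + 1), thv T i (a + 2)
      = (∑ i ∈ Finset.range n, thv T (i + 1) (a + 2)) + thv T 0 (a + 2) :=
    Finset.sum_range_succ' _ _
  omega

include hT in
lemma count_sum_1 :
    ∑ i ∈ Finset.range (μ.colLen 0), (mF' (k : ℕ) T i - thv T i (k : ℕ))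
      = ∑ i ∈ Finset.range (μ.colLen 0), (thv T i ((k : ℕ) + 2) - thv T i ((k : ℕ) + 1)) := by
  set a : ℕ := (k : ℕ) with ha
  have hmaster := master_sum hT (k := k)
  rw [← ha] at hmaster
  have e1 : ∑ i ∈ Finset.range (μ.colLen 0), ((mF' a T i - thv T i a) + (thv T i a + thv T i (a + 1)))
      = ∑ i ∈ Finset.range (μ.colLen 0), (mF' a T i + thv T i (a + 1)) := by
    refine Finset.sum_congr rfl fun i _ => ?_
    have h1 := cF_le_mF' a hT i
    omega
  have e2 : ∑ i ∈ Finset.range (μ.colLen 0), ((thv T i (a + 2) - thv T i (a + 1)) + (thv T i a + thv T i (a + 1)))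
      = ∑ i ∈ Finset.range (μ.colLen 0), (thv T i a + thv T i (a + 2)) := by
    refine Finset.sum_congr rfl fun i _ => ?_
    have h1 := thv_mono T i (show a + 1 ≤ a + 2 by omega)
    omega
  rw [Finset.sum_add_distrib] at e1 e2
  omega

include hT in
lemma count_sum_2 :
    ∑ i ∈ Finset.range (μ.colLen 0), (thv T i ((k : ℕ) + 2) - mF' (k : ℕ) T i)
      = ∑ i ∈ Finset.range (μ.colLen 0), (thv T i ((k : ℕ) + 1) - thv T i (k : ℕ)) := by
  set a : ℕ := (k : ℕ) with ha
  have hmaster := master_sum hT (k := k)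
  rw [← ha] at hmaster
  have e1 : ∑ i ∈ Finset.range (μ.colLen 0), ((thv T i (a + 2) - mF' a T i) + (mF' a T i + thv T i a))
      = ∑ i ∈ Finset.range (μ.colLen 0), (thv T i a + thv T i (a + 2)) := by
    refine Finset.sum_congr rfl fun i _ => ?_
    have h1 := mF'_le_dF a hT i
    omega
  have e2 : ∑ i ∈ Finset.range (μ.colLen 0), ((thv T i (a + 1) - thv T i a) + (mF' a T i + thv T i a))
      = ∑ i ∈ Finset.range (μ.colLen 0), (mF' a T i + thv T i (a + 1)) := by
    refine Finset.sum_congr rfl fun i _ => ?_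
    have h1 := thv_mono T i (show a ≤ a + 1 by omega)
    omega
  rw [Finset.sum_add_distrib] at e1 e2
  omega

include hk hT in
lemma wt_bk (v : Fin N) : wtS (bk k k' T) v = wtS T (Equiv.swap k k' v) := by
  set a : ℕ := (k : ℕ) with ha
  by_cases hv1 : v = k
  · rw [hv1]
    rw [Equiv.swap_apply_left, wt_rows, wt_rows]
    have lhs_count : ∀ i, ((Finset.range (μ.rowLen i)).filter
        fun j => tf (bk k k' T) i j = (k : ℕ)).card = mF' a T i - thv T i a := by
      intro i
      refine count_eq_sub (fun j => ?_) (fun j => ?_)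
      · have := Th_char hk hT i a j
        rw [Th, if_neg (by omega)] at this
        exact this
      · have := Th_char hk hT i (a + 1) j
        rw [Th, if_pos rfl] at this
        exact this
    have rhs_count : ∀ i, ((Finset.range (μ.rowLen i)).filter
        fun j => tf T i j = (k' : ℕ)).card = thv T i (a + 2) - thv T i (a + 1) := by
      intro i
      have hk2 : (k' : ℕ) = a + 1 := hk
      rw [hk2]
      refine count_eq_sub (fun j => thv_char hT i (a + 1) j) (fun j => thv_char hT i (a + 2) j)
    rw [Finset.sum_congr rfl (fun i _ => lhs_count i),
      Finset.sum_congr rfl (fun i _ => rhs_count i)]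
    exact count_sum_1 hT
  · by_cases hv2 : v = k'
    · rw [hv2]
      rw [Equiv.swap_apply_right, wt_rows, wt_rows]
      have lhs_count : ∀ i, ((Finset.range (μ.rowLen i)).filter
          fun j => tf (bk k k' T) i j = (k' : ℕ)).card = thv T i (a + 2) - mF' a T i := by
        intro i
        have hk2 : (k' : ℕ) = a + 1 := hk
        rw [hk2]
        refine count_eq_sub (fun j => ?_) (fun j => ?_)
        · have := Th_char hk hT i (a + 1) j
          rw [Th, if_pos rfl] at this
          exact this
        · have := Th_char hk hT i (a + 2) j
          rw [Th, if_neg (by omega)] at this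
          exact this
      have rhs_count : ∀ i, ((Finset.range (μ.rowLen i)).filter
          fun j => tf T i j = (k : ℕ)).card = thv T i (a + 1) - thv T i a := by
        intro i
        refine count_eq_sub (fun j => thv_char hT i a j) (fun j => thv_char hT i (a + 1) j)
      rw [Finset.sum_congr rfl (fun i _ => lhs_count i),
        Finset.sum_congr rfl (fun i _ => rhs_count i)]
      exact count_sum_2 hT
    · rw [Equiv.swap_apply_of_ne_of_ne hv1 hv2, wtS, wtS]
      congr 1
      apply Finset.filter_congr
      intro c _
      by_cases hc : T c = k ∨ T c = k'
      · have hbkc : bk k k' T c = k ∨ bk k k' T c = k' := by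
          rw [bk_apply, if_pos hc]
          split_ifs
          · left; rfl
          · right; rfl
        constructor
        · intro h
          rcases hbkc with h' | h' <;> rw [h] at h'
          · exact absurd h' hv1
          · exact absurd h' hv2
        · intro h
          rcases hc with h' | h' <;> rw [h] at h'
          · exact absurd h' hv1
          · exact absurd h' hv2
      · have hbkc : bk k k' T c = T c := by
          rw [bk_apply, if_neg hc]
        rw [hbkc]

end Sums

lemma adj_swap (x : Fin N → ℚ) (k k' : Fin N) (hk : (k' : ℕ) = (k : ℕ) + 1) :
    ∑ T ∈ Finset.univ.filter (IsSSYT μ), ∏ c : ↥μ.cells, x (Equiv.swap k k' (T c))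
      = ∑ T ∈ Finset.univ.filter (IsSSYT μ), ∏ c : ↥μ.cells, x (T c) := by
  refine Finset.sum_nbij' (bk k k') (bk k k') ?_ ?_ ?_ ?_ ?_
  · intro T hTmem
    rw [Finset.mem_filter] at hTmem ⊢
    exact ⟨Finset.mem_univ _, bk_ssyt hk hTmem.2⟩
  · intro T hTmem
    rw [Finset.mem_filter] at hTmem ⊢
    exact ⟨Finset.mem_univ _, bk_ssyt hk hTmem.2⟩
  · intro T hTmem
    exact bk_bk hk (Finset.mem_filter.1 hTmem).2
  · intro T hTmem
    exact bk_bk hk (Finset.mem_filter.1 hTmem).2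
  · intro T hTmem
    have hT : IsSSYT μ T := (Finset.mem_filter.1 hTmem).2
    have lhs : ∏ c : ↥μ.cells, x (Equiv.swap k k' (T c))
        = ∏ v : Fin N, x (Equiv.swap k k' v) ^ wtS T v := prod_wt (fun v => x (Equiv.swap k k' v)) T
    have rhs : ∏ c : ↥μ.cells, x (bk k k' T c)
        = ∏ v : Fin N, x v ^ wtS (bk k k' T) v := prod_wt x (bk k k' T)
    rw [lhs, rhs]
    have hwt : ∀ v, wtS (bk k k' T) v = wtS T (Equiv.swap k k' v) := wt_bk hk hT
    have e1 : ∏ v : Fin N, x v ^ wtS (bk k k' T) v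
        = ∏ v : Fin N, x v ^ wtS T (Equiv.swap k k' v) :=
      Finset.prod_congr rfl fun v _ => by rw [hwt v]
    rw [e1, ← Equiv.prod_comp (Equiv.swap k k') (fun v => x v ^ wtS T (Equiv.swap k k' v))]
    refine Finset.prod_congr rfl fun v _ => ?_
    rw [Equiv.swap_apply_self]

end BKaux

/-- The tableau-generating polynomial for Schur functions is symmetric in the
variables `x₁, …, x_N`. -/
theorem stmt_15 (N : ℕ) (μ : YoungDiagram) (x : Fin N → ℚ) (σ : Equiv.Perm (Fin N)) :
    ∑ T ∈ Finset.univ.filter (IsSSYT μ), ∏ c : ↥μ.cells, (x ∘ σ) (T c)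
      = ∑ T ∈ Finset.univ.filter (IsSSYT μ), ∏ c : ↥μ.cells, x (T c) := by
  set P : Equiv.Perm (Fin N) → Prop := fun τ => ∀ y : Fin N → ℚ,
    ∑ T ∈ Finset.univ.filter (IsSSYT μ), ∏ c : ↥μ.cells, y (τ (T c))
      = ∑ T ∈ Finset.univ.filter (IsSSYT μ), ∏ c : ↥μ.cells, y (T c) with hP
  have hone : P 1 := by
    intro y
    rfl
  have hmul : ∀ τ₁ τ₂, P τ₁ → P τ₂ → P (τ₁ * τ₂) := by
    intro τ₁ τ₂ h1 h2 y
    have : ∀ T : ↥μ.cells → Fin N, ∏ c : ↥μ.cells, y ((τ₁ * τ₂) (T c))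
        = ∏ c : ↥μ.cells, (fun v => y (τ₁ v)) (τ₂ (T c)) := fun T => rfl
    rw [Finset.sum_congr rfl (fun T _ => this T), h2 (fun v => y (τ₁ v)), h1 y]
  have hinv : ∀ τ, P τ → P τ⁻¹ := by
    intro τ h y
    have h1 := h (fun v => y (τ⁻¹ v))
    have : ∀ T : ↥μ.cells → Fin N, ∏ c : ↥μ.cells, y (τ⁻¹ (τ (T c)))
        = ∏ c : ↥μ.cells, y (T c) := by
      intro T
      refine Finset.prod_congr rfl fun c _ => ?_
      rw [← Equiv.Perm.mul_apply, inv_mul_cancel, Equiv.Perm.one_apply]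
    rw [Finset.sum_congr rfl (fun T _ => this T)] at h1
    exact h1.symm
  have hadj : ∀ k k' : Fin N, (k' : ℕ) = (k : ℕ) + 1 → P (Equiv.swap k k') := by
    intro k k' hk y
    exact BKaux.adj_swap y k k' hk
  have hswap : ∀ u v : Fin N, P (Equiv.swap u v) := by
    have key : ∀ n : ℕ, ∀ u v : Fin N, (v : ℕ) = (u : ℕ) + n + 1 → P (Equiv.swap u v) := by
      intro n
      induction n with
      | zero => intro u v huv; exact hadj u v (by omega)
      | succ n ih =>
        intro u v huv
        have hvpos : (1 : ℕ) ≤ (v : ℕ) := by omega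
        set v' : Fin N := ⟨(v : ℕ) - 1, by omega⟩ with hv'
        have hne1 : u ≠ v' := by
          intro h
          have : (u : ℕ) = (v : ℕ) - 1 := congrArg Fin.val h
          omega
        have hne2 : u ≠ v := by
          intro h
          have : (u : ℕ) = (v : ℕ) := congrArg Fin.val h
          omega
        have heq : Equiv.swap v' v * Equiv.swap u v' * Equiv.swap v' v = Equiv.swap v u :=
          Equiv.swap_mul_swap_mul_swap hne1 hne2
        have hP1 : P (Equiv.swap v' v) := hadj v' v (by simp [hv']; omega)
        have hP2 : P (Equiv.swap u v') := ih u v' (by simp [hv']; omega)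
        have : P (Equiv.swap v u) := by
          rw [← heq]
          exact hmul _ _ (hmul _ _ hP1 hP2) hP1
        rwa [Equiv.swap_comm] at this
    intro u v
    rcases lt_trichotomy (u : ℕ) (v : ℕ) with h | h | h
    · exact key ((v : ℕ) - (u : ℕ) - 1) u v (by omega)
    · have : u = v := Fin.ext h
      rw [this, Equiv.swap_self]
      exact hone
    · have := key ((u : ℕ) - (v : ℕ) - 1) v u (by omega)
      rwa [Equiv.swap_comm] at this
  have hσ : P σ := by
    refine Equiv.Perm.swap_induction_on σ hone ?_
    intro f u v huv hf
    exact hmul _ _ (hswap u v) hf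
  exact hσ x
end
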